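/- arXiv:1210.0006 — 2 statements merged into one kernel-verified Lean document; each statement's English description precedes it below -/
import Mathlib

section
/- The function v(t,x,y) := x + √(T-t) · ψ((y-x)/√(T-t)) for t < T and x ≤ y, where ψ(z) = z(2Φ(z)-1) + (2/√(2π))e^{-z²/2}, satisfies the heat equation ∂_t v + (1/2) ∂²_{xx} v = 0 on {(t,x,y) : t < T, x < y}, and moreover ∂_y v(t,x,x) = 0. -/
/-!
With φ the standard normal density, ψ = z(2Φ - 1) + 2φ, so ψ' = 2Φ - 1 (the terms ±2zφ cancel
because φ' = -zφ) and ψ - zψ' = 2φ = ψ''. The latter is the profile equation of the backward heat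
equation for self-similar solutions: with s = √(T - t) and z = (y - x)/s one finds
∂_t v = -(ψ - zψ')(z)/(2s) = -φ(z)/s and ∂²_x v = ψ''(z)/s = 2φ(z)/s. On the diagonal,
∂_y v = 2Φ(0) - 1 = 0 by symmetry of φ.
-/

/-- The standard normal cdf, as an integral of the Gaussian density. -/
noncomputable def stdNormalCdf (z : ℝ) : ℝ :=
  ∫ x in Set.Iic z, Real.exp (-x ^ 2 / 2) / Real.sqrt (2 * Real.pi)

/-- ψ(z) = z(2Φ(z) - 1) + (2/√(2π)) e^{-z²/2}. -/
noncomputable def psi (z : ℝ) : ℝ :=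
  z * (2 * stdNormalCdf z - 1) + (2 / Real.sqrt (2 * Real.pi)) * Real.exp (-z ^ 2 / 2)

/-- v(t,x,y) = x + √(T-t) ψ((y-x)/√(T-t)). -/
noncomputable def vFun (T t x y : ℝ) : ℝ :=
  x + Real.sqrt (T - t) * psi ((y - x) / Real.sqrt (T - t))

open MeasureTheory ProbabilityTheory Real Set Filter Topology

noncomputable def stdNormalPdf (z : ℝ) : ℝ := exp (-z ^ 2 / 2) / √(2 * π)

lemma stdNormalPdf_eq_gaussianPDFReal : stdNormalPdf = gaussianPDFReal 0 1 := by
  ext z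
  simp [stdNormalPdf, gaussianPDFReal, div_eq_inv_mul]

lemma integrable_stdNormalPdf : Integrable stdNormalPdf :=
  stdNormalPdf_eq_gaussianPDFReal ▸ integrable_gaussianPDFReal 0 1

lemma integral_stdNormalPdf : ∫ z, stdNormalPdf z = 1 :=
  stdNormalPdf_eq_gaussianPDFReal ▸ integral_gaussianPDFReal_eq_one 0 one_ne_zero

lemma continuous_stdNormalPdf : Continuous stdNormalPdf := by
  unfold stdNormalPdf; fun_prop

lemma stdNormalPdf_neg (z : ℝ) : stdNormalPdf (-z) = stdNormalPdf z := by
  simp [stdNormalPdf]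

lemma hasDerivAt_stdNormalPdf (z : ℝ) : HasDerivAt stdNormalPdf (-z * stdNormalPdf z) z := by
  have hexponent : HasDerivAt (fun w : ℝ => -w ^ 2 / 2) (-z) z :=
    (((hasDerivAt_pow 2 z).neg).div_const 2).congr_deriv (by norm_num; ring)
  exact (hexponent.exp.div_const √(2 * π)).congr_deriv (by unfold stdNormalPdf; ring)

lemma stdNormalCdf_eq_integral (z : ℝ) : stdNormalCdf z = ∫ x in Iic z, stdNormalPdf x := rfl

lemma hasDerivAt_stdNormalCdf (z : ℝ) : HasDerivAt stdNormalCdf (stdNormalPdf z) z := by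
  have hint := integrable_stdNormalPdf.integrableOn (s := Iic 0)
  have : stdNormalCdf = fun w => stdNormalCdf 0 + ∫ u in (0 : ℝ)..w, stdNormalPdf u := by
    ext w
    rw [stdNormalCdf_eq_integral, stdNormalCdf_eq_integral,
      ← intervalIntegral.integral_Iic_sub_Iic hint integrable_stdNormalPdf.integrableOn]
    ring
  rw [this]
  exact (intervalIntegral.integral_hasDerivAt_right integrable_stdNormalPdf.intervalIntegrable
    (continuous_stdNormalPdf.stronglyMeasurableAtFilter _ _)
    continuous_stdNormalPdf.continuousAt).const_add _

lemma stdNormalCdf_zero : stdNormalCdf 0 = 1 / 2 := by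
  have hsymm : ∫ x in Ioi (0 : ℝ), stdNormalPdf x = stdNormalCdf 0 := by
    simpa [stdNormalPdf_neg, stdNormalCdf_eq_integral] using
      (integral_comp_neg_Iic (0 : ℝ) stdNormalPdf).symm
  have hsplit := intervalIntegral.integral_Iic_add_Ioi (b := (0 : ℝ))
    integrable_stdNormalPdf.integrableOn integrable_stdNormalPdf.integrableOn
  rw [integral_stdNormalPdf, hsymm] at hsplit
  change stdNormalCdf 0 + stdNormalCdf 0 = 1 at hsplit
  linarith

@[fun_prop]
lemma continuous_stdNormalCdf : Continuous stdNormalCdf :=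
  continuous_iff_continuousAt.mpr fun z => (hasDerivAt_stdNormalCdf z).continuousAt

lemma psi_eq (z : ℝ) : psi z = z * (2 * stdNormalCdf z - 1) + 2 * stdNormalPdf z := by
  simp only [psi, stdNormalPdf]
  ring

lemma hasDerivAt_psi (z : ℝ) : HasDerivAt psi (2 * stdNormalCdf z - 1) z := by
  have h := ((hasDerivAt_id' z).mul (((hasDerivAt_stdNormalCdf z).const_mul 2).sub_const 1)).add
    ((hasDerivAt_stdNormalPdf z).const_mul 2)
  rw [funext psi_eq]
  exact h.congr_deriv (by ring)

lemma hasDerivAt_mul_comp_const_div {s g : ℝ → ℝ} {s' d ξ t : ℝ} (hs : HasDerivAt s s' t)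
    (hst : s t ≠ 0) (hg : HasDerivAt g d (ξ / s t)) :
    HasDerivAt (fun τ => s τ * g (ξ / s τ)) (s' * (g (ξ / s t) - ξ / s t * d)) t := by
  refine (hs.mul (hg.comp t ((hasDerivAt_const t ξ).div hs hst))).congr_deriv ?_
  simp only [Function.comp_apply, Pi.div_apply]
  field_simp
  ring

lemma hasDerivAt_sqrt_const_sub {T t : ℝ} (ht : t < T) :
    HasDerivAt (fun τ => √(T - τ)) (-(1 / (2 * √(T - t)))) t := by
  refine ((hasDerivAt_sqrt (sub_pos.mpr ht).ne').comp t
    ((hasDerivAt_id' t).const_sub T)).congr_deriv ?_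
  simp

lemma hasDerivAt_const_sub_div (y c x : ℝ) :
    HasDerivAt (fun x' => (y - x') / c) (-1 / c) x :=
  ((hasDerivAt_id' x).const_sub y).div_const _

section vFun

variable {T t : ℝ}

lemma hasDerivAt_vFun_time (x y : ℝ) (ht : t < T) :
    HasDerivAt (fun τ => vFun T τ x y) (-stdNormalPdf ((y - x) / √(T - t)) / √(T - t)) t := by
  have hs : √(T - t) ≠ 0 := (sqrt_pos.mpr (sub_pos.mpr ht)).ne'
  refine ((hasDerivAt_mul_comp_const_div (hasDerivAt_sqrt_const_sub ht) hs
    (hasDerivAt_psi _)).const_add x).congr_deriv ?_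
  rw [psi_eq]
  field_simp
  ring

lemma hasDerivAt_vFun_left (y x : ℝ) (ht : t < T) :
    HasDerivAt (fun x' => vFun T t x' y) (2 - 2 * stdNormalCdf ((y - x) / √(T - t))) x := by
  have hs : √(T - t) ≠ 0 := (sqrt_pos.mpr (sub_pos.mpr ht)).ne'
  refine ((hasDerivAt_id' x).add (((hasDerivAt_psi _).comp x
    (hasDerivAt_const_sub_div y _ x)).const_mul _)).congr_deriv ?_
  field_simp
  ring

lemma hasDerivAt_deriv_vFun_left (y x : ℝ) (ht : t < T) :
    HasDerivAt (fun x' => deriv (fun x'' => vFun T t x'' y) x')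
      (2 * stdNormalPdf ((y - x) / √(T - t)) / √(T - t)) x := by
  rw [funext fun x' => (hasDerivAt_vFun_left y x' ht).deriv]
  refine ((((hasDerivAt_stdNormalCdf _).comp x
    (hasDerivAt_const_sub_div y _ x)).const_mul 2).const_sub 2).congr_deriv ?_
  ring

lemma hasDerivAt_vFun_right (x y : ℝ) (ht : t < T) :
    HasDerivAt (fun y' => vFun T t x y') (2 * stdNormalCdf ((y - x) / √(T - t)) - 1) y := by
  have hs : √(T - t) ≠ 0 := (sqrt_pos.mpr (sub_pos.mpr ht)).ne'
  refine ((((hasDerivAt_psi _).comp y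
    (((hasDerivAt_id' y).sub_const x).div_const _)).const_mul _).const_add x).congr_deriv ?_
  field_simp

lemma vFun_heat_equation (x y : ℝ) (ht : t < T) :
    deriv (fun τ => vFun T τ x y) t
      + (1 / 2) * deriv (fun x' => deriv (fun x'' => vFun T t x'' y) x') x = 0 := by
  rw [(hasDerivAt_vFun_time x y ht).deriv, (hasDerivAt_deriv_vFun_left y x ht).deriv]
  ring

lemma tendsto_deriv_vFun_right (x : ℝ) (ht : t < T) :
    Tendsto (fun y => deriv (fun y' => vFun T t x y') y) (𝓝[>] x) (𝓝 0) := by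
  rw [funext fun y => (hasDerivAt_vFun_right x y ht).deriv]
  have hcont : Continuous fun y => 2 * stdNormalCdf ((y - x) / √(T - t)) - 1 := by
    fun_prop
  simpa [stdNormalCdf_zero] using
    (hcont.continuousAt (x := x)).tendsto.mono_left nhdsWithin_le_nhds

end vFun

theorem stmt6_general (T t x y : ℝ) (htT : t < T) :
    deriv (fun t' => vFun T t' x y) t
        + (1 / 2) * deriv (fun x' => deriv (fun x'' => vFun T t x'' y) x') x = 0 ∧
    Filter.Tendsto (fun y' => deriv (fun y'' => vFun T t x y'') y')
      (nhdsWithin x (Set.Ioi x)) (nhds 0) :=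
  ⟨vFun_heat_equation x y htT, tendsto_deriv_vFun_right x htT⟩

/-- on {t < T, x < y}, v satisfies the heat equation
∂_t v + (1/2) ∂²_{xx} v = 0, and ∂_y v(t,x,y) → 0 as y ↓ x. -/
theorem stmt6 (T t x y : ℝ) (htT : t < T) (hxy : x < y) :
    deriv (fun t' => vFun T t' x y) t
        + (1 / 2) * deriv (fun x' => deriv (fun x'' => vFun T t x'' y) x') x = 0 ∧
    Filter.Tendsto (fun y' => deriv (fun y'' => vFun T t x y'') y')
      (nhdsWithin x (Set.Ioi x)) (nhds 0) :=
  stmt6_general T t x y htT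
end

section
/- Suppose u : [0,T] × Ω → ℝ is progressively measurable (u(t,ω) depends only on ω_{·∧t}) and satisfies: there is a modulus of continuity ρ with u(t,ω) - u(t',ω') ≤ ρ(d_∞((t,ω),(t',ω'))) whenever t ≤ t'. Then for every ω, the map t ↦ u(t,ω) admits left limits at every t ∈ (0,T], and u(t-,ω) ≤ u(t,ω). -/
noncomputable def dInfty (T : ℝ) (d : ℕ)
    (p q : ℝ × (ℝ → EuclideanSpace ℝ (Fin d))) : ℝ :=
  |p.1 - q.1| + ⨆ s : Set.Icc (0:ℝ) T, ‖p.2 (min (s : ℝ) p.1) - q.2 (min (s : ℝ) q.1)‖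

/-- if u is progressively measurable (non-anticipative) and
satisfies the one-sided modulus condition u(t,ω) - u(t',ω') ≤ ρ(d_∞) for t ≤ t',
then for every path ω, t ↦ u(t,ω) admits a left limit l at every t ∈ (0,T],
and l ≤ u(t,ω). -/
theorem stmt14 (T : ℝ) (hT : 0 < T) (d : ℕ)
    (u : ℝ → (ℝ → EuclideanSpace ℝ (Fin d)) → ℝ)
    (ρ : ℝ → ℝ) (hρ0 : ρ 0 = 0) (hρnonneg : ∀ x, 0 ≤ ρ x)
    (hρmono : Monotone ρ) (hρcont : ContinuousAt ρ 0)
    (hadapt : ∀ t (ω : ℝ → EuclideanSpace ℝ (Fin d)),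
      u t ω = u t (fun s => ω (min s t)))
    (hmod : ∀ t t' : ℝ, t ∈ Set.Icc 0 T → t' ∈ Set.Icc 0 T → t ≤ t' →
      ∀ ω ω' : ℝ → EuclideanSpace ℝ (Fin d),
        ContinuousOn ω (Set.Icc 0 T) → ω 0 = 0 →
        ContinuousOn ω' (Set.Icc 0 T) → ω' 0 = 0 →
        u t ω - u t' ω' ≤ ρ (dInfty T d (t, ω) (t', ω'))) :
    ∀ ω : ℝ → EuclideanSpace ℝ (Fin d),
      ContinuousOn ω (Set.Icc 0 T) → ω 0 = 0 →
      ∀ t : ℝ, 0 < t → t ≤ T →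
        ∃ l : ℝ,
          Filter.Tendsto (fun s => u s ω) (nhdsWithin t (Set.Iio t)) (nhds l) ∧
          l ≤ u t ω := by
  intro ω hω hω0 t ht htT
  set f : ℝ → ℝ := fun s => u s ω with hf
  -- Key one-sided estimate
  have hA : ∀ ε > (0:ℝ), ∃ η > (0:ℝ), ∀ s ∈ Set.Icc (0:ℝ) T, ∀ s' ∈ Set.Icc (0:ℝ) T,
      s ≤ s' → s' - s < η → f s - f s' < ε := by
    intro ε hε
    obtain ⟨δ₀, hδ₀, hρd⟩ := Metric.continuousAt_iff.mp hρcont ε hε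
    have hUC : UniformContinuousOn ω (Set.Icc 0 T) :=
      isCompact_Icc.uniformContinuousOn_of_continuous hω
    obtain ⟨δ, hδ, hUC'⟩ := Metric.uniformContinuousOn_iff.mp hUC (δ₀/4) (by linarith)
    refine ⟨min δ (δ₀/4), by positivity, ?_⟩
    intro s hs s' hs' hss hlt
    have hsup : (⨆ r : Set.Icc (0:ℝ) T, ‖ω (min (r:ℝ) s) - ω (min (r:ℝ) s')‖) ≤ δ₀/4 := by
      apply Real.iSup_le _ (by linarith)
      rintro ⟨r, hr⟩
      have h1 : min r s ∈ Set.Icc (0:ℝ) T :=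
        ⟨le_min hr.1 hs.1, le_trans (min_le_left _ _) hr.2⟩
      have h2 : min r s' ∈ Set.Icc (0:ℝ) T :=
        ⟨le_min hr.1 hs'.1, le_trans (min_le_left _ _) hr.2⟩
      have hmm : |min r s - min r s'| ≤ |s - s'| := by
        have := abs_min_sub_min_le_max r s r s'
        simpa using this
      have hd : dist (min r s) (min r s') < δ := by
        rw [Real.dist_eq]
        have h3 : |s - s'| < δ := by
          rw [abs_sub_comm, abs_of_nonneg (by linarith)]
          exact lt_of_lt_of_le hlt (min_le_left _ _)
        exact lt_of_le_of_lt hmm h3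
      have := hUC' _ h1 _ h2 hd
      rw [dist_eq_norm] at this
      exact this.le
    have hsupnn : (0:ℝ) ≤ ⨆ r : Set.Icc (0:ℝ) T, ‖ω (min (r:ℝ) s) - ω (min (r:ℝ) s')‖ :=
      Real.iSup_nonneg fun r => norm_nonneg _
    have hdval : dInfty T d (s, ω) (s', ω) < δ₀ := by
      have h3 : |s - s'| < δ₀/4 := by
        rw [abs_sub_comm, abs_of_nonneg (by linarith)]
        exact lt_of_lt_of_le hlt (min_le_right _ _)
      unfold dInfty
      simp only
      linarith
    have hdnn : (0:ℝ) ≤ dInfty T d (s, ω) (s', ω) := by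
      unfold dInfty
      simp only
      have := abs_nonneg (s - s')
      linarith
    have hρlt : ρ (dInfty T d (s, ω) (s', ω)) < ε := by
      have := hρd (x := dInfty T d (s, ω) (s', ω))
        (by rw [Real.dist_eq, sub_zero, abs_of_nonneg hdnn]; exact hdval)
      rw [hρ0, Real.dist_eq, sub_zero] at this
      exact lt_of_le_of_lt (le_abs_self _) this
    exact lt_of_le_of_lt (hmod s s' hs hs' hss ω ω hω hω0 hω hω0) hρlt
  have htIcc : t ∈ Set.Icc (0:ℝ) T := ⟨ht.le, htT⟩
  -- Cauchy along the left filter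
  have hcau : Cauchy ((nhdsWithin t (Set.Iio t)).map f) := by
    rw [Metric.cauchy_iff]
    refine ⟨Filter.map_neBot, ?_⟩
    intro ε hε
    obtain ⟨η, hη, hA'⟩ := hA (ε/3) (by linarith)
    set a := max 0 (t - η/2) with ha
    have hat : a < t := max_lt ht (by linarith)
    have ha0 : (0:ℝ) ≤ a := le_max_left _ _
    have haη : t - η/2 ≤ a := le_max_right _ _
    have hmemIcc : ∀ s ∈ Set.Ioo a t, s ∈ Set.Icc (0:ℝ) T := fun s hs =>
      ⟨le_of_lt (lt_of_le_of_lt ha0 hs.1), le_trans hs.2.le htT⟩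
    have hne : (f '' Set.Ioo a t).Nonempty :=
      ⟨f ((a+t)/2), Set.mem_image_of_mem f ⟨by linarith, by linarith⟩⟩
    have hbdd : BddAbove (f '' Set.Ioo a t) := by
      refine ⟨f t + ε/3, ?_⟩
      rintro x ⟨s, hs, rfl⟩
      have := hA' s (hmemIcc s hs) t htIcc hs.2.le (by linarith [hs.1])
      linarith
    set M := sSup (f '' Set.Ioo a t) with hM
    obtain ⟨x, hx, hxM⟩ := exists_lt_of_lt_csSup hne (show M - ε/3 < M by linarith)
    obtain ⟨s₁, hs₁, rfl⟩ := hx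
    refine ⟨f '' Set.Ioo s₁ t, Filter.image_mem_map
      (Ioo_mem_nhdsLT_of_mem ⟨hs₁.2, le_refl t⟩), ?_⟩
    have hbound : ∀ s ∈ Set.Ioo s₁ t, M - 2*(ε/3) < f s ∧ f s ≤ M := by
      intro s hs
      have hsa : s ∈ Set.Ioo a t := ⟨lt_trans hs₁.1 hs.1, hs.2⟩
      constructor
      · have := hA' s₁ (hmemIcc s₁ hs₁) s (hmemIcc s hsa) hs.1.le
          (by linarith [hs₁.1, hs.2])
        linarith
      · exact le_csSup hbdd (Set.mem_image_of_mem f hsa)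
    rintro x ⟨s, hs, rfl⟩ y ⟨s', hs', rfl⟩
    obtain ⟨h1, h2⟩ := hbound s hs
    obtain ⟨h3, h4⟩ := hbound s' hs'
    rw [Real.dist_eq, abs_sub_lt_iff]
    constructor <;> linarith
  obtain ⟨l, hl⟩ := CompleteSpace.complete hcau
  have htd : Filter.Tendsto f (nhdsWithin t (Set.Iio t)) (nhds l) := hl
  refine ⟨l, htd, ?_⟩
  refine le_of_forall_pos_le_add ?_
  intro ε hε
  obtain ⟨η, hη, hA'⟩ := hA ε hε
  have hev : ∀ᶠ s in nhdsWithin t (Set.Iio t), f s ≤ u t ω + ε := by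
    filter_upwards [Ioo_mem_nhdsLT_of_mem
      (show t ∈ Set.Ioc (max 0 (t - η/2)) t from ⟨max_lt ht (by linarith), le_refl t⟩)]
      with s hs
    have hsIcc : s ∈ Set.Icc (0:ℝ) T :=
      ⟨le_of_lt (lt_of_le_of_lt (le_max_left _ _) hs.1), le_trans hs.2.le htT⟩
    have := hA' s hsIcc t htIcc hs.2.le
      (by have := lt_of_le_of_lt (le_max_right 0 (t - η/2)) hs.1; linarith)
    linarith
  exact le_of_tendsto htd hev
end
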